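/- arXiv:2302.10061 — 5 statements merged into one kernel-verified Lean document; each statement's English description precedes it below -/
import Mathlib

section
/- Let I be an open interval and E : I × I → ℝ a quasideviation. Suppose there exist functions a, b : I × I → ℝ such that E((x+y)/2, (u+v)/2) ≤ a(u,v)·E(x,u) + b(u,v)·E(y,v) for all x, y, u, v ∈ I. Then, defining c(u,v) := (a(u,v)+b(v,u))/2, the symmetrized inequality E((x+y)/2, (u+v)/2) ≤ c(u,v)·E(x,u) + c(v,u)·E(y,v) holds for all x, y, u, v ∈ I, and moreover c(u,u) = 1/2 for all u ∈ I. -/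
/-! Swapping `(x, u)` with `(y, v)` in the hypothesis and averaging the two inequalities gives
the symmetrized one. On the diagonal `x = y`, `u = v` the hypothesis reads
`E(x,u) ≤ (a(u,u) + b(u,u)) E(x,u)`; since `I` is open there are `x` on both sides of `u`,
where `E(x,u)` has opposite signs, which forces `a(u,u) + b(u,u) = 1`. -/

namespace Real

lemma pos_of_sign_eq_of_pos {r s : ℝ} (h : sign r = sign s) (hs : 0 < s) : 0 < r := by
  rw [sign_of_pos hs] at h
  rcases lt_trichotomy r 0 with hr | rfl | hr
  · rw [sign_of_neg hr] at h
    norm_num at h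
  · rw [sign_zero] at h
    norm_num at h
  · exact hr

lemma neg_of_sign_eq_of_neg {r s : ℝ} (h : sign r = sign s) (hs : s < 0) : r < 0 := by
  have := pos_of_sign_eq_of_pos (r := -r) (s := -s) (by rw [sign_neg, sign_neg, h]) (by linarith)
  linarith

end Real

lemma eq_one_of_le_mul_of_pos_of_neg {c p q : ℝ} (hp : 0 < p) (hq : q < 0)
    (hcp : p ≤ c * p) (hcq : q ≤ c * q) : c = 1 := by
  nlinarith

lemma IsOpen.exists_lt_lt_mem {I : Set ℝ} (hI : IsOpen I) {u : ℝ} (hu : u ∈ I) :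
    ∃ x ∈ I, ∃ y ∈ I, x < u ∧ u < y := by
  obtain ⟨l, r, ⟨hl, hr⟩, hsub⟩ := mem_nhds_iff_exists_Ioo_subset.1 (hI.mem_nhds hu)
  obtain ⟨x, hlx, hxu⟩ := exists_between hl
  obtain ⟨y, huy, hyr⟩ := exists_between hr
  exact ⟨x, hsub ⟨hlx, hxu.trans hr⟩, y, hsub ⟨hl.trans huy, hyr⟩, hxu, huy⟩

section

variable {I : Set ℝ} {E a b : ℝ → ℝ → ℝ}

lemma le_symmetrized_of_le
    (hab : ∀ x ∈ I, ∀ y ∈ I, ∀ u ∈ I, ∀ v ∈ I,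
      E ((x + y) / 2) ((u + v) / 2) ≤ a u v * E x u + b u v * E y v)
    {x y u v : ℝ} (hx : x ∈ I) (hy : y ∈ I) (hu : u ∈ I) (hv : v ∈ I) :
    E ((x + y) / 2) ((u + v) / 2) ≤
      (a u v + b v u) / 2 * E x u + (a v u + b u v) / 2 * E y v := by
  have hxy := hab x hx y hy u hu v hv
  have hyx := hab y hy x hx v hv u hu
  rw [add_comm y, add_comm v] at hyx
  linarith

lemma add_diag_eq_one (hI : IsOpen I)
    (hD1 : ∀ x ∈ I, ∀ u ∈ I, Real.sign (E x u) = Real.sign (x - u))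
    (hab : ∀ x ∈ I, ∀ y ∈ I, ∀ u ∈ I, ∀ v ∈ I,
      E ((x + y) / 2) ((u + v) / 2) ≤ a u v * E x u + b u v * E y v)
    {u : ℝ} (hu : u ∈ I) : a u u + b u u = 1 := by
  have hdiag : ∀ x ∈ I, E x u ≤ (a u u + b u u) * E x u := fun x hx => by
    simpa [add_mul] using hab x hx x hx u hu u hu
  obtain ⟨x, hx, y, hy, hxu, huy⟩ := hI.exists_lt_lt_mem hu
  exact eq_one_of_le_mul_of_pos_of_neg
    (Real.pos_of_sign_eq_of_pos (hD1 y hy u hu) (sub_pos.2 huy))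
    (Real.neg_of_sign_eq_of_neg (hD1 x hx u hu) (sub_neg.2 hxu)) (hdiag y hy) (hdiag x hx)

end

theorem stmt_2_general (I : Set ℝ) (hI : IsOpen I)
    (E : ℝ → ℝ → ℝ)
    (hD1 : ∀ x ∈ I, ∀ u ∈ I, Real.sign (E x u) = Real.sign (x - u))
    (a b : ℝ → ℝ → ℝ)
    (hab : ∀ x ∈ I, ∀ y ∈ I, ∀ u ∈ I, ∀ v ∈ I,
      E ((x + y) / 2) ((u + v) / 2) ≤ a u v * E x u + b u v * E y v) :
    (∀ x ∈ I, ∀ y ∈ I, ∀ u ∈ I, ∀ v ∈ I,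
      E ((x + y) / 2) ((u + v) / 2) ≤
        (a u v + b v u) / 2 * E x u + (a v u + b u v) / 2 * E y v) ∧
    (∀ u ∈ I, (a u u + b u u) / 2 = 1 / 2) :=
  ⟨fun _ hx _ hy _ hu _ hv => le_symmetrized_of_le hab hx hy hu hv,
    fun _ hu => by rw [add_diag_eq_one hI hD1 hab hu]⟩

/-- Symmetrization of the convexity inequality for a quasideviation: from
`E((x+y)/2,(u+v)/2) ≤ a(u,v)E(x,u) + b(u,v)E(y,v)` one gets the symmetrized inequality
with `c(u,v) := (a(u,v)+b(v,u))/2`, and `c(u,u) = 1/2`. -/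
theorem stmt_2 (I : Set ℝ) (hI : IsOpen I) (hconv : Convex ℝ I)
    (E : ℝ → ℝ → ℝ)
    (hD1 : ∀ x ∈ I, ∀ u ∈ I, Real.sign (E x u) = Real.sign (x - u))
    (hD2 : ∀ x ∈ I, ContinuousOn (fun u => E x u) I)
    (hD3 : ∀ x ∈ I, ∀ y ∈ I, x < y →
      StrictAntiOn (fun u => E x u / E y u) (Set.Ioo x y))
    (a b : ℝ → ℝ → ℝ)
    (hab : ∀ x ∈ I, ∀ y ∈ I, ∀ u ∈ I, ∀ v ∈ I,
      E ((x + y) / 2) ((u + v) / 2) ≤ a u v * E x u + b u v * E y v) :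
    (∀ x ∈ I, ∀ y ∈ I, ∀ u ∈ I, ∀ v ∈ I,
      E ((x + y) / 2) ((u + v) / 2) ≤
        (a u v + b v u) / 2 * E x u + (a v u + b u v) / 2 * E y v) ∧
    (∀ u ∈ I, (a u u + b u u) / 2 = 1 / 2) :=
  stmt_2_general I hI E hD1 a b hab
end

section
/- Let I be an open interval and E : I × I → ℝ a quasideviation. Suppose there exists c : I × I → ℝ with E((x+y)/2, (u+v)/2) ≤ c(u,v)·E(x,u) + c(v,u)·E(y,v) for all x, y, u, v ∈ I. Then for each fixed u ∈ I, the function x ↦ E(x,u) is convex on I. -/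
/-!
Taking `x = y` and `u = v` in the hypothesis gives `E(x,u) ≤ 2 c(u,u) E(x,u)`; as `E(·,u)` takes
both signs on `I`, this forces `c(u,u) = 1/2`, and then `u = v` alone says that `E(·,u)` is Jensen
convex. It is nonpositive on the open set `I ∩ (-∞,u)`, so the Bernstein–Doetsch theorem applies.

Bernstein–Doetsch on an interval: Jensen convexity gives the convexity inequality at dyadic
weights; homotheties of ratio `2⁻ⁿ` spread an upper bound on one ball to a neighbourhood of every
point; a local upper bound and Jensen convexity force continuity; and continuity extends the
dyadic inequality to all weights.
-/

open Filter Metric Set Topology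

lemma pos_of_sign_eq_sign {a b : ℝ} (h : Real.sign a = Real.sign b) (hb : 0 < b) : 0 < a := by
  rw [Real.sign_of_pos hb] at h
  by_contra! ha
  rcases ha.lt_or_eq with ha | rfl
  · rw [Real.sign_of_neg ha] at h; norm_num at h
  · rw [Real.sign_zero] at h; norm_num at h

lemma neg_of_sign_eq_sign {a b : ℝ} (h : Real.sign a = Real.sign b) (hb : b < 0) : a < 0 :=
  neg_pos.1 <| pos_of_sign_eq_sign (by rw [Real.sign_neg, Real.sign_neg, h]) (neg_pos.2 hb)

def JensenConvexOn (I : Set ℝ) (f : ℝ → ℝ) : Prop :=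
  ∀ x ∈ I, ∀ y ∈ I, f ((x + y) / 2) ≤ (f x + f y) / 2

lemma Convex.mul_add_one_sub_mul_mem {I : Set ℝ} (hI : Convex ℝ I) {x y a : ℝ} (hx : x ∈ I)
    (hy : y ∈ I) (ha₀ : 0 ≤ a) (ha₁ : a ≤ 1) : a * x + (1 - a) * y ∈ I :=
  hI hx hy ha₀ (sub_nonneg.2 ha₁) (add_sub_cancel a 1)

namespace JensenConvexOn

variable {I : Set ℝ} {f : ℝ → ℝ}

lemma mono {J : Set ℝ} (hf : JensenConvexOn I f) (hJ : J ⊆ I) : JensenConvexOn J f :=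
  fun x hx y hy => hf x (hJ hx) y (hJ hy)

theorem le_dyadic (hI : Convex ℝ I) (hf : JensenConvexOn I f) {x y : ℝ} (hx : x ∈ I)
    (hy : y ∈ I) (n k : ℕ) (hk : k ≤ 2 ^ n) :
    f ((k / 2 ^ n : ℝ) * x + (1 - k / 2 ^ n) * y)
      ≤ (k / 2 ^ n : ℝ) * f x + (1 - k / 2 ^ n) * f y := by
  induction n generalizing k with
  | zero => interval_cases k <;> simp
  | succ n ih =>
    obtain ⟨i, j, rfl, hi, hj⟩ : ∃ i j, i + j = k ∧ i ≤ 2 ^ n ∧ j ≤ 2 ^ n :=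
      ⟨k / 2, k - k / 2, by omega, by rw [pow_succ] at hk; omega, by rw [pow_succ] at hk; omega⟩
    set p : ℕ → ℝ := fun l => (l / 2 ^ n : ℝ) * x + (1 - l / 2 ^ n) * y
    have hp : ∀ l : ℕ, l ≤ 2 ^ n → p l ∈ I := fun l hl =>
      hI.mul_add_one_sub_mul_mem hx hy (by positivity)
        (div_le_one_of_le₀ (by exact_mod_cast hl) (by positivity))
    have hk : ((i + j : ℕ) : ℝ) / 2 ^ (n + 1) = ((i : ℝ) / 2 ^ n + j / 2 ^ n) / 2 := by
      push_cast; field_simp; ring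
    calc f (((i + j : ℕ) : ℝ) / 2 ^ (n + 1) * x + (1 - ((i + j : ℕ) : ℝ) / 2 ^ (n + 1)) * y)
        = f ((p i + p j) / 2) := by rw [hk]; congr 1; ring
      _ ≤ (f (p i) + f (p j)) / 2 := hf _ (hp i hi) _ (hp j hj)
      _ ≤ (((i : ℝ) / 2 ^ n * f x + (1 - i / 2 ^ n) * f y)
            + ((j : ℝ) / 2 ^ n * f x + (1 - j / 2 ^ n) * f y)) / 2 := by
        linarith [ih i hi, ih j hj]
      _ = _ := by rw [hk]; ring

theorem le_inv_two_pow (hI : Convex ℝ I) (hf : JensenConvexOn I f) {x y : ℝ} (hx : x ∈ I)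
    (hy : y ∈ I) (n : ℕ) :
    f ((2 ^ n)⁻¹ * x + (1 - (2 ^ n)⁻¹) * y) ≤ (2 ^ n)⁻¹ * f x + (1 - (2 ^ n)⁻¹) * f y := by
  simpa using hf.le_dyadic hI hx hy n 1 Nat.one_le_two_pow

theorem abs_sub_le_of_bounded_on_ball {z δ M : ℝ} (hf : JensenConvexOn (ball z δ) f)
    (hM : ∀ t ∈ ball z δ, f t ≤ M) (n : ℕ) {t : ℝ} (ht : dist t z < δ / 2 ^ n) :
    |f t - f z| ≤ (M - f z) / 2 ^ n := by
  have h2n : (0 : ℝ) < 2 ^ n := by positivity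
  have hδ : 0 < δ := (div_pos_iff_of_pos_right h2n).1 (dist_nonneg.trans_lt ht)
  have hsmall : ∀ s, dist s z < δ / 2 ^ n → s ∈ ball z δ := fun s hs =>
    ball_subset_ball (div_le_self hδ.le (one_le_pow₀ one_le_two)) hs
  have hz : z ∈ ball z δ := mem_ball_self hδ
  have upper : ∀ s, dist s z < δ / 2 ^ n → f s - f z ≤ (M - f z) / 2 ^ n := by
    intro s hs
    set w := z + 2 ^ n * (s - z)
    have hw : w ∈ ball z δ := by
      rw [mem_ball, Real.dist_eq, add_sub_cancel_left, abs_mul, abs_of_pos h2n, ← Real.dist_eq,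
        ← lt_div_iff₀' h2n]
      exact hs
    have hsw : s = (2 ^ n)⁻¹ * w + (1 - (2 ^ n)⁻¹) * z := by field_simp; ring
    have := hf.le_inv_two_pow (convex_ball z δ) hw hz n
    rw [← hsw] at this
    have := mul_le_mul_of_nonneg_left (hM w hw) (inv_nonneg.2 h2n.le)
    rw [div_eq_inv_mul]
    linarith
  have hreflect : dist (2 * z - t) z < δ / 2 ^ n := by
    rwa [Real.dist_eq, show 2 * z - t - z = -(t - z) by ring, abs_neg, ← Real.dist_eq]
  have hmid := hf t (hsmall t ht) (2 * z - t) (hsmall _ hreflect)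
  rw [show (t + (2 * z - t)) / 2 = z by ring] at hmid
  rw [abs_sub_le_iff]
  exact ⟨upper t ht, by linarith [upper _ hreflect]⟩

theorem continuousAt_of_bounded_on_ball {z δ M : ℝ} (hδ : 0 < δ)
    (hf : JensenConvexOn (ball z δ) f) (hM : ∀ t ∈ ball z δ, f t ≤ M) : ContinuousAt f z := by
  rw [Metric.continuousAt_iff]
  intro ε hε
  obtain ⟨n, hn⟩ : ∃ n : ℕ, (M - f z) / 2 ^ n < ε :=
    ((tendsto_const_nhds.div_atTop (tendsto_pow_atTop_atTop_of_one_lt one_lt_two)).eventually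
      (gt_mem_nhds hε)).exists
  refine ⟨δ / 2 ^ n, by positivity, fun {t} ht => ?_⟩
  rw [Real.dist_eq]
  exact (hf.abs_sub_le_of_bounded_on_ball hM n ht).trans_lt hn

theorem exists_bounded_on_ball (hI : IsOpen I) (hconv : Convex ℝ I) (hf : JensenConvexOn I f)
    {m ε M : ℝ} (hε : 0 < ε) (hball : ball m ε ⊆ I) (hM : ∀ t ∈ ball m ε, f t ≤ M)
    {z : ℝ} (hz : z ∈ I) : ∃ δ > 0, ball z δ ⊆ I ∧ ∃ M', ∀ t ∈ ball z δ, f t ≤ M' := by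
  obtain ⟨ρ, hρ, hρI⟩ := Metric.isOpen_iff.1 hI z hz
  obtain ⟨n, hn⟩ := pow_unbounded_of_one_lt (dist z m / ρ + 1) one_lt_two
  have h2n : (1 : ℝ) < 2 ^ n := by linarith [div_nonneg dist_nonneg hρ.le (a := dist z m)]
  -- The homothety of ratio `2⁻ⁿ` centred at `y` maps `ball m ε` onto `ball z (ε / 2 ^ n)`.
  set y := z + (z - m) / (2 ^ n - 1)
  have hy : y ∈ I := by
    refine hρI ?_
    rw [mem_ball, Real.dist_eq, add_sub_cancel_left, abs_div, abs_of_pos (sub_pos.2 h2n),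
      div_lt_iff₀ (sub_pos.2 h2n), ← Real.dist_eq]
    rw [div_add_one hρ.ne', div_lt_iff₀ hρ] at hn
    linarith
  refine ⟨min (ε / 2 ^ n) ρ, by positivity, (ball_subset_ball (min_le_right _ _)).trans hρI,
    max M (f y), fun t ht => ?_⟩
  set s := m + 2 ^ n * (t - z)
  have hs : s ∈ ball m ε := by
    have := (mem_ball.1 ht).trans_le (min_le_left _ _)
    rw [Real.dist_eq, lt_div_iff₀ (by positivity)] at this
    rw [mem_ball, Real.dist_eq, add_sub_cancel_left, abs_mul, abs_of_pos (by positivity)]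
    linarith
  have hts : t = (2 ^ n)⁻¹ * s + (1 - (2 ^ n)⁻¹) * y := by
    have : (2 : ℝ) ^ n - 1 ≠ 0 := (sub_pos.2 h2n).ne'
    simp only [s, y]
    field_simp
    ring
  calc f t ≤ (2 ^ n)⁻¹ * f s + (1 - (2 ^ n)⁻¹) * f y :=
        hts ▸ hf.le_inv_two_pow hconv (hball hs) hy n
    _ ≤ (2 ^ n)⁻¹ * max M (f y) + (1 - (2 ^ n)⁻¹) * max M (f y) := by
      gcongr
      · exact (hM s hs).trans (le_max_left _ _)
      · exact sub_nonneg.2 (inv_le_one_of_one_le₀ h2n.le)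
      · exact le_max_right _ _
    _ = max M (f y) := by ring

theorem convexOn_of_continuousOn (hI : Convex ℝ I) (hf : JensenConvexOn I f)
    (hcont : ContinuousOn f I) : ConvexOn ℝ I f := by
  refine ⟨hI, fun x hx y hy a b ha hb hab => ?_⟩
  obtain rfl : b = 1 - a := by linarith
  have ha₁ : a ≤ 1 := by linarith
  set q : ℕ → ℝ := fun n => (⌊a * 2 ^ n⌋₊ : ℝ) / 2 ^ n
  have hq : Tendsto q atTop (𝓝 a) :=
    (tendsto_nat_floor_mul_div_atTop ha).comp (tendsto_pow_atTop_atTop_of_one_lt one_lt_two)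
  have hfloor : ∀ n : ℕ, ⌊a * 2 ^ n⌋₊ ≤ 2 ^ n := fun n =>
    Nat.floor_le_of_le (by push_cast; exact mul_le_of_le_one_left (by positivity) ha₁)
  have hq_mem : ∀ n, q n * x + (1 - q n) * y ∈ I := fun n =>
    hI.mul_add_one_sub_mul_mem hx hy (by positivity)
      (div_le_one_of_le₀ (by exact_mod_cast hfloor n) (by positivity))
  have hL : Tendsto (fun n => f (q n * x + (1 - q n) * y)) atTop
      (𝓝 (f (a * x + (1 - a) * y))) :=
    (hcont _ (hI.mul_add_one_sub_mul_mem hx hy ha ha₁)).tendsto.comp <|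
      tendsto_nhdsWithin_iff.2 ⟨(hq.mul_const x).add ((tendsto_const_nhds.sub hq).mul_const y),
        Eventually.of_forall hq_mem⟩
  have hR : Tendsto (fun n => q n * f x + (1 - q n) * f y) atTop
      (𝓝 (a * f x + (1 - a) * f y)) :=
    (hq.mul_const _).add ((tendsto_const_nhds.sub hq).mul_const _)
  exact le_of_tendsto_of_tendsto' hL hR fun n => hf.le_dyadic hI hx hy n _ (hfloor n)

theorem convexOn_of_bddAbove (hI : IsOpen I) (hconv : Convex ℝ I) (hf : JensenConvexOn I f)
    {U : Set ℝ} (hU : IsOpen U) (hUne : U.Nonempty) (hUI : U ⊆ I) (hbdd : BddAbove (f '' U)) :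
    ConvexOn ℝ I f := by
  obtain ⟨m, hm⟩ := hUne
  obtain ⟨ε, hε, hεU⟩ := Metric.isOpen_iff.1 hU m hm
  obtain ⟨M, hM⟩ := hbdd
  refine hf.convexOn_of_continuousOn hconv fun z hz => ContinuousAt.continuousWithinAt ?_
  obtain ⟨δ, hδ, hδI, M', hM'⟩ := hf.exists_bounded_on_ball hI hconv hε (hεU.trans hUI)
    (fun t ht => hM (mem_image_of_mem f (hεU ht))) hz
  exact (hf.mono hδI).continuousAt_of_bounded_on_ball hδ hM'

end JensenConvexOn

theorem stmt_3_general (I : Set ℝ) (hI : IsOpen I) (hconv : Convex ℝ I)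
    (E : ℝ → ℝ → ℝ)
    (hD1 : ∀ x ∈ I, ∀ u ∈ I, Real.sign (E x u) = Real.sign (x - u))
    (c : ℝ → ℝ → ℝ)
    (hc : ∀ x ∈ I, ∀ y ∈ I, ∀ u ∈ I, ∀ v ∈ I,
      E ((x + y) / 2) ((u + v) / 2) ≤ c u v * E x u + c v u * E y v) :
    ∀ u ∈ I, ConvexOn ℝ I (fun x => E x u) := by
  intro u hu
  have hdiag : ∀ x ∈ I, E x u ≤ c u u * E x u + c u u * E x u := fun x hx => by
    simpa only [add_self_div_two] using hc x hx x hx u hu u hu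
  obtain ⟨a, hua, ha⟩ := Eventually.exists_gt (hI.mem_nhds hu)
  obtain ⟨b, hbu, hb⟩ := Eventually.exists_lt (hI.mem_nhds hu)
  have hEa : 0 < E a u := pos_of_sign_eq_sign (hD1 a ha u hu) (sub_pos.2 hua)
  have hEb : E b u < 0 := neg_of_sign_eq_sign (hD1 b hb u hu) (sub_neg.2 hbu)
  have hcu : c u u = 1 / 2 := by nlinarith [hdiag a ha, hdiag b hb]
  have hjensen : JensenConvexOn I fun x => E x u := fun x hx y hy => by
    have := hc x hx y hy u hu u hu
    rw [add_self_div_two, hcu] at this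
    linarith
  refine hjensen.convexOn_of_bddAbove hI hconv (hI.inter isOpen_Iio) ⟨b, hb, hbu⟩
    inter_subset_left ⟨0, ?_⟩
  rintro _ ⟨x, ⟨hx, hxu⟩, rfl⟩
  exact (neg_of_sign_eq_sign (hD1 x hx u hu) (sub_neg.2 hxu)).le

/-- If a quasideviation `E` satisfies the symmetrized inequality with weights `c`, then
for each fixed `u ∈ I` the function `x ↦ E(x,u)` is convex on `I`. -/
theorem stmt_3 (I : Set ℝ) (hI : IsOpen I) (hconv : Convex ℝ I)
    (E : ℝ → ℝ → ℝ)
    (hD1 : ∀ x ∈ I, ∀ u ∈ I, Real.sign (E x u) = Real.sign (x - u))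
    (hD2 : ∀ x ∈ I, ContinuousOn (fun u => E x u) I)
    (hD3 : ∀ x ∈ I, ∀ y ∈ I, x < y →
      StrictAntiOn (fun u => E x u / E y u) (Set.Ioo x y))
    (c : ℝ → ℝ → ℝ)
    (hc : ∀ x ∈ I, ∀ y ∈ I, ∀ u ∈ I, ∀ v ∈ I,
      E ((x + y) / 2) ((u + v) / 2) ≤ c u v * E x u + c v u * E y v) :
    ∀ u ∈ I, ConvexOn ℝ I (fun x => E x u) :=
  stmt_3_general I hI hconv E hD1 c hc
end

section
/- Let I be an open interval and E : I × I → ℝ a quasideviation such that the normalized function E⁺(x,u) := E(x,u)/∂₁⁺E(u,u) is well-defined (i.e., the right partial derivative ∂₁⁺E(u,u) exists and is positive for all u ∈ I) and convex on I². Let α, β > 0 with α ≤ β and define E_{α,β}(x,u) := αE(x,u) for x ≤ u and βE(x,u) for x > u. Then ∂₁⁺E_{α,β}(u,u) = β∂₁⁺E(u,u) and the normalized function E⁺_{α,β}(x,u) := E_{α,β}(x,u)/∂₁⁺E_{α,β}(u,u) equals (1/β)·max(αE⁺(x,u), βE⁺(x,u)) and is convex on I². -/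
/-!
On the diagonal `E u u = 0`, and to the right of it `E_{α,β} = β E`, so the right derivative
of `E_{α,β}` at `u` is `β ∂₁⁺E(u,u)`. By (D1), `E(x,u) ≤ 0` for `x ≤ u` and `E(x,u) > 0` for
`x > u`; since `α ≤ β`, the factor chosen by `E_{α,β}` is in both cases the one realising
`max (α E, β E)`. Hence `E⁺_{α,β} = β⁻¹ max (α E⁺, β E⁺)`, a maximum of two nonnegative
multiples of the convex function `E⁺`.
-/

open Set

namespace Real

lemma pos_of_sign_eq_sign {a b : ℝ} (h : sign a = sign b) (hb : 0 < b) : 0 < a := by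
  rw [sign_of_pos hb] at h
  by_contra ha
  rcases (not_lt.1 ha).lt_or_eq with ha | ha
  · rw [sign_of_neg ha] at h; norm_num at h
  · rw [ha, sign_zero] at h; norm_num at h

lemma nonpos_of_sign_eq_sign {a b : ℝ} (h : sign a = sign b) (hb : b ≤ 0) : a ≤ 0 :=
  not_lt.1 fun ha => (pos_of_sign_eq_sign h.symm ha).not_ge hb

lemma eq_zero_of_sign_eq_sign {a b : ℝ} (h : sign a = sign b) (hb : b = 0) : a = 0 :=
  sign_eq_zero_iff.1 (by rw [h, hb, sign_zero])

end Real

section Quasideviation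

variable {I : Set ℝ} {E : ℝ → ℝ → ℝ}

lemma quasideviation_apply_self
    (hD1 : ∀ x ∈ I, ∀ u ∈ I, Real.sign (E x u) = Real.sign (x - u)) {u : ℝ}
    (hu : u ∈ I) : E u u = 0 :=
  Real.eq_zero_of_sign_eq_sign (hD1 u hu u hu) (sub_self u)

lemma quasideviation_pos_of_lt
    (hD1 : ∀ x ∈ I, ∀ u ∈ I, Real.sign (E x u) = Real.sign (x - u)) {x u : ℝ}
    (hx : x ∈ I) (hu : u ∈ I) (hux : u < x) : 0 < E x u :=
  Real.pos_of_sign_eq_sign (hD1 x hx u hu) (sub_pos.2 hux)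

lemma quasideviation_nonpos_of_le
    (hD1 : ∀ x ∈ I, ∀ u ∈ I, Real.sign (E x u) = Real.sign (x - u)) {x u : ℝ}
    (hx : x ∈ I) (hu : u ∈ I) (hxu : x ≤ u) : E x u ≤ 0 :=
  Real.nonpos_of_sign_eq_sign (hD1 x hx u hu) (sub_nonpos.2 hxu)

end Quasideviation

lemma ite_mul_eq_max_mul {α β t : ℝ} (hαβ : α ≤ β) {p : Prop} [Decidable p]
    (hp : p → t ≤ 0) (hnp : ¬p → 0 ≤ t) :
    (if p then α * t else β * t) = max (α * t) (β * t) := by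
  split_ifs with h
  · exact (max_eq_left (mul_le_mul_of_nonpos_right hαβ (hp h))).symm
  · exact (max_eq_right (mul_le_mul_of_nonneg_right hαβ (hnp h))).symm

lemma hasDerivWithinAt_Ici_ite_le_mul {f : ℝ → ℝ} {f' u : ℝ} (α β : ℝ)
    (hf : HasDerivWithinAt f f' (Ici u) u) (hfu : f u = 0) :
    HasDerivWithinAt (fun x => if x ≤ u then α * f x else β * f x) (β * f') (Ici u) u := by
  refine (hf.const_mul β).congr_of_mem (fun x hx => ?_) self_mem_Ici
  split_ifs with h
  · obtain rfl : x = u := le_antisymm h hx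
    simp [hfu]
  · rfl

theorem stmt_8_general (I : Set ℝ)
    (E : ℝ → ℝ → ℝ)
    (hD1 : ∀ x ∈ I, ∀ u ∈ I, Real.sign (E x u) = Real.sign (x - u))
    (d : ℝ → ℝ)
    (hd : ∀ u ∈ I, HasDerivWithinAt (fun x => E x u) (d u) (Set.Ici u) u ∧ 0 < d u)
    (hEplus : ConvexOn ℝ (I ×ˢ I) (fun p : ℝ × ℝ => E p.1 p.2 / d p.2))
    (α β : ℝ) (hα : 0 < α) (hαβ : α ≤ β)
    (Eab : ℝ → ℝ → ℝ)
    (hEab : ∀ x u : ℝ, Eab x u = if x ≤ u then α * E x u else β * E x u) :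
    (∀ u ∈ I, HasDerivWithinAt (fun x => Eab x u) (β * d u) (Set.Ici u) u) ∧
    (∀ x ∈ I, ∀ u ∈ I,
      Eab x u / (β * d u) =
        (1 / β) * max (α * (E x u / d u)) (β * (E x u / d u))) ∧
    ConvexOn ℝ (I ×ˢ I) (fun p : ℝ × ℝ => Eab p.1 p.2 / (β * d p.2)) := by
  obtain rfl : Eab = fun x u => if x ≤ u then α * E x u else β * E x u := funext₂ hEab
  have hβ : 0 < β := hα.trans_le hαβ
  have hnormalized : ∀ x ∈ I, ∀ u ∈ I, (if x ≤ u then α * E x u else β * E x u) / (β * d u) =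
      (1 / β) * max (α * (E x u / d u)) (β * (E x u / d u)) := by
    intro x hx u hu
    have hdu := (hd u hu).2
    rw [← ite_mul_eq_max_mul hαβ
      (fun h => div_nonpos_of_nonpos_of_nonneg (quasideviation_nonpos_of_le hD1 hx hu h) hdu.le)
      (fun h => (div_pos (quasideviation_pos_of_lt hD1 hx hu (not_le.1 h)) hdu).le)]
    split_ifs <;> field_simp
  refine ⟨fun u hu => hasDerivWithinAt_Ici_ite_le_mul α β (hd u hu).1
    (quasideviation_apply_self hD1 hu), hnormalized, ?_⟩
  refine (((hEplus.smul hα.le).sup (hEplus.smul hβ.le)).smul (one_div_pos.2 hβ).le).congr ?_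
  rintro ⟨x, u⟩ ⟨hx, hu⟩
  exact (hnormalized x hx u hu).symm

/-- If `E` is a quasideviation whose normalization `E⁺(x,u) = E(x,u)/∂₁⁺E(u,u)` is
well defined (with `∂₁⁺E(u,u) = d u > 0`) and convex on `I²`, and `0 < α ≤ β`, then for
`E_{α,β}(x,u) = αE(x,u)` (`x ≤ u`), `βE(x,u)` (`x > u`) one has
`∂₁⁺E_{α,β}(u,u) = β·∂₁⁺E(u,u)`, the normalization `E⁺_{α,β}` equals
`(1/β)·max(αE⁺, βE⁺)`, and it is convex on `I²`. -/
theorem stmt_8 (I : Set ℝ) (hI : IsOpen I) (hconv : Convex ℝ I)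
    (E : ℝ → ℝ → ℝ)
    (hD1 : ∀ x ∈ I, ∀ u ∈ I, Real.sign (E x u) = Real.sign (x - u))
    (hD2 : ∀ x ∈ I, ContinuousOn (fun u => E x u) I)
    (hD3 : ∀ x ∈ I, ∀ y ∈ I, x < y →
      StrictAntiOn (fun u => E x u / E y u) (Set.Ioo x y))
    (d : ℝ → ℝ)
    (hd : ∀ u ∈ I, HasDerivWithinAt (fun x => E x u) (d u) (Set.Ici u) u ∧ 0 < d u)
    (hEplus : ConvexOn ℝ (I ×ˢ I) (fun p : ℝ × ℝ => E p.1 p.2 / d p.2))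
    (α β : ℝ) (hα : 0 < α) (hαβ : α ≤ β)
    (Eab : ℝ → ℝ → ℝ)
    (hEab : ∀ x u : ℝ, Eab x u = if x ≤ u then α * E x u else β * E x u) :
    (∀ u ∈ I, HasDerivWithinAt (fun x => Eab x u) (β * d u) (Set.Ici u) u) ∧
    (∀ x ∈ I, ∀ u ∈ I,
      Eab x u / (β * d u) =
        (1 / β) * max (α * (E x u / d u)) (β * (E x u / d u))) ∧
    ConvexOn ℝ (I ×ˢ I) (fun p : ℝ × ℝ => Eab p.1 p.2 / (β * d p.2)) :=
  stmt_8_general I E hD1 d hd hEplus α β hα hαβ Eab hEab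
end

section
/- Let I ⊆ (0,∞) be an open interval, f : I → ℝ continuous and strictly increasing, and α, β > 0 with α ≤ β. Then the function E_{α,β} : I² → ℝ given by E_{α,β}(x,u) = α(f(x)−f(u)) for x ≤ u and β(f(x)−f(u)) for x > u is a quasideviation. -/
/-! Since `f` is increasing, `f x - f u` has the sign of `x - u`, so on `I` the two branches of
`E_{α,β}(x, ·)` are `α` times the negative part and `β` times the positive part of
`f x - f ·`, which gives (D1) and (D2). For `x < u < y` the ratio in (D3) is
`α (f x - t) / (β (f y - t))` at `t = f u`, a decreasing Möbius function of `t` on `t < f y`. -/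

namespace Real

lemma sign_mul_of_pos {a r : ℝ} (ha : 0 < a) : sign (a * r) = sign r := by
  rcases lt_trichotomy r 0 with hr | rfl | hr
  · rw [sign_of_neg (mul_neg_of_pos_of_neg ha hr), sign_of_neg hr]
  · rw [mul_zero]
  · rw [sign_of_pos (mul_pos ha hr), sign_of_pos hr]

end Real

lemma StrictMonoOn.sign_sub {s : Set ℝ} {f : ℝ → ℝ} (hf : StrictMonoOn f s) {x u : ℝ}
    (hx : x ∈ s) (hu : u ∈ s) : Real.sign (f x - f u) = Real.sign (x - u) := by
  rcases lt_trichotomy x u with h | rfl | h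
  · rw [Real.sign_of_neg (sub_neg.2 (hf hx hu h)), Real.sign_of_neg (sub_neg.2 h)]
  · simp
  · rw [Real.sign_of_pos (sub_pos.2 (hf hu hx h)), Real.sign_of_pos (sub_pos.2 h)]

lemma StrictMonoOn.ite_mul_sub_eq_min_add_max {s : Set ℝ} {f : ℝ → ℝ} (hf : StrictMonoOn f s)
    {x u : ℝ} (hx : x ∈ s) (hu : u ∈ s) (α β : ℝ) :
    (if x ≤ u then α * (f x - f u) else β * (f x - f u)) =
      α * min (f x - f u) 0 + β * max (f x - f u) 0 := by
  split_ifs with h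
  · have hd : f x - f u ≤ 0 := sub_nonpos.2 (hf.monotoneOn hx hu h)
    rw [min_eq_left hd, max_eq_right hd, mul_zero, add_zero]
  · have hd : 0 < f x - f u := sub_pos.2 (hf hu hx (not_le.1 h))
    rw [min_eq_right hd.le, max_eq_left hd.le, mul_zero, zero_add]

lemma strictAntiOn_mul_sub_div_mul_sub {α β a b : ℝ} (hα : 0 < α) (hβ : 0 < β) (hab : a < b) :
    StrictAntiOn (fun t => α * (a - t) / (β * (b - t))) (Set.Iio b) := by
  intro s hs t ht hst
  rw [div_lt_div_iff₀ (mul_pos hβ (sub_pos.2 ht)) (mul_pos hβ (sub_pos.2 hs))]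
  nlinarith [mul_pos (mul_pos hα hβ) (mul_pos (sub_pos.2 hst) (sub_pos.2 hab))]

theorem stmt_10_general (I : Set ℝ) (hconv : Convex ℝ I)
    (f : ℝ → ℝ) (hf : ContinuousOn f I) (hmono : StrictMonoOn f I)
    (α β : ℝ) (hα : 0 < α) (hβ : 0 < β)
    (Eab : ℝ → ℝ → ℝ)
    (hEab : ∀ x u : ℝ,
      Eab x u = if x ≤ u then α * (f x - f u) else β * (f x - f u)) :
    (∀ x ∈ I, ∀ u ∈ I, Real.sign (Eab x u) = Real.sign (x - u)) ∧
    (∀ x ∈ I, ContinuousOn (fun u => Eab x u) I) ∧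
    (∀ x ∈ I, ∀ y ∈ I, x < y →
      StrictAntiOn (fun u => Eab x u / Eab y u) (Set.Ioo x y)) := by
  refine ⟨fun x hx u hu => ?_, fun x hx => ?_, fun x hx y hy hxy => ?_⟩
  · rw [hEab, ← hmono.sign_sub hx hu]
    split_ifs
    exacts [Real.sign_mul_of_pos hα, Real.sign_mul_of_pos hβ]
  · have hsplit : ContinuousOn (fun u => α * min (f x - f u) 0 + β * max (f x - f u) 0) I := by
      fun_prop
    exact hsplit.congr fun u hu => by rw [hEab, hmono.ite_mul_sub_eq_min_add_max hx hu]
  · have hsub : Set.Ioo x y ⊆ I := (hconv.ordConnected.out hx hy).trans' Set.Ioo_subset_Icc_self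
    have hfu : Set.MapsTo f (Set.Ioo x y) (Set.Iio (f y)) :=
      fun u hu => hmono (hsub hu) hy hu.2
    refine ((strictAntiOn_mul_sub_div_mul_sub hα hβ (hmono hx hy hxy)).comp_strictMonoOn
      (hmono.mono hsub) hfu).congr fun u hu => ?_
    simp only [Function.comp_apply, hEab, if_pos hu.1.le, if_neg (not_le.2 hu.2)]

/-- If `I ⊆ (0,∞)` is an open interval, `f : I → ℝ` is continuous and strictly
increasing, and `0 < α ≤ β`, then `E_{α,β}(x,u) = α(f(x)−f(u))` for `x ≤ u`,
`β(f(x)−f(u))` for `x > u`, is a quasideviation. -/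
theorem stmt_10 (I : Set ℝ) (hI : IsOpen I) (hconv : Convex ℝ I)
    (hIpos : I ⊆ Set.Ioi (0 : ℝ))
    (f : ℝ → ℝ) (hf : ContinuousOn f I) (hmono : StrictMonoOn f I)
    (α β : ℝ) (hα : 0 < α) (hβ : 0 < β) (hαβ : α ≤ β)
    (Eab : ℝ → ℝ → ℝ)
    (hEab : ∀ x u : ℝ,
      Eab x u = if x ≤ u then α * (f x - f u) else β * (f x - f u)) :
    (∀ x ∈ I, ∀ u ∈ I, Real.sign (Eab x u) = Real.sign (x - u)) ∧
    (∀ x ∈ I, ContinuousOn (fun u => Eab x u) I) ∧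
    (∀ x ∈ I, ∀ y ∈ I, x < y →
      StrictAntiOn (fun u => Eab x u / Eab y u) (Set.Ioo x y)) :=
  stmt_10_general I hconv f hf hmono α β hα hβ Eab hEab
end

section
/- Let r < q with r, q ∈ (0,1) and q + r ≥ 1, let β_{q,r} := (q(q−1)/(r(r−1)))^{1/(q−r)}, and let 0 < a < b. Then γ_{q,r}(t) = (t^q − t^r)/(q−r) is convex on [a/b, b/a] if and only if β_{q,r} ≤ a/b. -/
/-!
On `(0, ∞)` the function `γ` is twice differentiable with
`γ''(t) = (q(q-1)t^(q-2) - r(r-1)t^(r-2))/(q-r)`, so convexity on `[a/b, b/a]` amounts to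
`γ'' ≥ 0` on `(a/b, b/a)`. Dividing by `r(r-1)t^(r-2) < 0` turns `γ''(t) ≥ 0` into
`β t ≤ 1`, and this holds on the whole open interval iff it holds at its right end `b/a`.
-/

open Set Filter Topology

theorem convexOn_iff_forall_nonneg_of_hasDerivAt {D : Set ℝ} (hD : Convex ℝ D)
    {f f' f'' : ℝ → ℝ} (hf : ∀ x ∈ D, HasDerivAt f (f' x) x)
    (hf' : ∀ x ∈ interior D, HasDerivAt f' (f'' x) x) :
    ConvexOn ℝ D f ↔ ∀ x ∈ interior D, 0 ≤ f'' x := by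
  constructor
  · intro hconv x hx
    have hmono : MonotoneOn f' D := by
      intro y hy z hz hyz
      simpa only [(hf y hy).deriv, (hf z hz).deriv] using
        hconv.monotoneOn_deriv (fun w hw => (hf w hw).differentiableAt) hy hz hyz
    have hacc : AccPt x (𝓟 D) := by
      rw [accPt_principal_iff_nhdsWithin, sdiff_eq, inter_comm, nhdsWithin_inter_of_mem']
      · infer_instance
      · exact mem_nhdsWithin_of_mem_nhds (mem_interior_iff_mem_nhds.mp hx)
    exact (hf' x hx).hasDerivWithinAt.nonneg_of_monotoneOn hacc hmono
  · intro h
    exact convexOn_of_hasDerivWithinAt2_nonneg hD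
      (fun x hx => (hf x hx).continuousAt.continuousWithinAt)
      (fun x hx => (hf x (interior_subset hx)).hasDerivWithinAt)
      (fun x hx => (hf' x hx).hasDerivWithinAt) h

theorem forall_mem_Ioo_mul_le_one_iff {c α β : ℝ} (hc : 0 ≤ c) (hαβ : α < β) :
    (∀ t ∈ Ioo α β, c * t ≤ 1) ↔ c * β ≤ 1 := by
  constructor
  · intro h
    have hclosed : IsClosed {t : ℝ | c * t ≤ 1} := isClosed_le (by fun_prop) continuous_const
    exact (hclosed.closure_subset_iff.mpr h) (by simp [closure_Ioo hαβ.ne, hαβ.le])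
  · intro h t ht
    exact (mul_le_mul_of_nonneg_left ht.2.le hc).trans h

theorem mul_rpow_one_div_le_one_iff {c t p : ℝ} (hc : 0 ≤ c) (ht : 0 ≤ t) (hp : 0 < p) :
    c ^ (1 / p) * t ≤ 1 ↔ c * t ^ p ≤ 1 := by
  have key : (c ^ (1 / p) * t) ^ p = c * t ^ p := by
    rw [Real.mul_rpow (by positivity) ht, ← Real.rpow_mul hc, one_div_mul_cancel hp.ne',
      Real.rpow_one]
  rw [← key, ← Real.rpow_le_rpow_iff (x := c ^ (1 / p) * t) (by positivity) zero_le_one hp,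
    Real.one_rpow]

theorem hasDerivAt_rpow_sub_rpow_div (q r : ℝ) {t : ℝ} (ht : 0 < t) :
    HasDerivAt (fun x => (x ^ q - x ^ r) / (q - r))
      ((q * t ^ (q - 1) - r * t ^ (r - 1)) / (q - r)) t :=
  ((Real.hasDerivAt_rpow_const (Or.inl ht.ne')).sub
    (Real.hasDerivAt_rpow_const (Or.inl ht.ne'))).div_const _

theorem hasDerivAt_mul_rpow_sub_mul_rpow_div (q r : ℝ) {t : ℝ} (ht : 0 < t) :
    HasDerivAt (fun x => (q * x ^ (q - 1) - r * x ^ (r - 1)) / (q - r))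
      ((q * (q - 1) * t ^ (q - 2) - r * (r - 1) * t ^ (r - 2)) / (q - r)) t := by
  refine ((((Real.hasDerivAt_rpow_const (p := q - 1) (Or.inl ht.ne')).const_mul q).fun_sub
    ((Real.hasDerivAt_rpow_const (p := r - 1) (Or.inl ht.ne')).const_mul r)).div_const
    (q - r)).congr_deriv ?_
  rw [sub_sub, sub_sub, one_add_one_eq_two]
  ring

theorem div_mul_sub_one_nonneg {q r : ℝ} (hq₀ : 0 ≤ q) (hq₁ : q ≤ 1) (hr₀ : 0 ≤ r)
    (hr₁ : r ≤ 1) :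
    0 ≤ q * (q - 1) / (r * (r - 1)) :=
  div_nonneg_of_nonpos (mul_nonpos_of_nonneg_of_nonpos hq₀ (by linarith))
    (mul_nonpos_of_nonneg_of_nonpos hr₀ (by linarith))

theorem mul_rpow_sub_mul_rpow_div_nonneg_iff {q r t : ℝ} (hr : 0 < r) (hrq : r < q) (hq : q < 1)
    (ht : 0 < t) :
    0 ≤ (q * (q - 1) * t ^ (q - 2) - r * (r - 1) * t ^ (r - 2)) / (q - r) ↔
      (q * (q - 1) / (r * (r - 1))) ^ (1 / (q - r)) * t ≤ 1 := by
  have hqr : 0 < q - r := sub_pos.mpr hrq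
  have hrneg : r * (r - 1) < 0 := mul_neg_of_pos_of_neg hr (by linarith)
  have hfactor : q * (q - 1) * t ^ (q - 2) - r * (r - 1) * t ^ (r - 2) =
      t ^ (r - 2) * (q * (q - 1) * t ^ (q - r) - r * (r - 1)) := by
    rw [show q - 2 = (q - r) + (r - 2) by ring, Real.rpow_add ht]
    ring
  have hc := div_mul_sub_one_nonneg (hr.trans hrq).le hq.le hr.le (hrq.trans hq).le
  rw [mul_rpow_one_div_le_one_iff hc ht.le hqr, le_div_iff₀ hqr, zero_mul, hfactor,
    mul_nonneg_iff_of_pos_left (Real.rpow_pos_of_pos ht _), sub_nonneg, div_mul_eq_mul_div,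
    div_le_one_of_neg hrneg]

theorem stmt_19_general (q r a b : ℝ) (hrq : r < q) (hr : 0 < r) (hq : q < 1)
    (ha : 0 < a) (hab : a < b)
    (γ : ℝ → ℝ) (hγ : ∀ t : ℝ, 0 < t → γ t = (t ^ q - t ^ r) / (q - r)) :
    ConvexOn ℝ (Set.Icc (a / b) (b / a)) γ ↔
      (q * (q - 1) / (r * (r - 1))) ^ (1 / (q - r)) ≤ a / b := by
  have hb : 0 < b := ha.trans hab
  have hpos : ∀ t ∈ Icc (a / b) (b / a), 0 < t := fun t ht => (div_pos ha hb).trans_le ht.1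
  have hγ' (t : ℝ) (ht : 0 < t) :
      HasDerivAt γ ((q * t ^ (q - 1) - r * t ^ (r - 1)) / (q - r)) t :=
    (hasDerivAt_rpow_sub_rpow_div q r ht).congr_of_eventuallyEq
      (eventuallyEq_of_mem (Ioi_mem_nhds ht) hγ)
  rw [convexOn_iff_forall_nonneg_of_hasDerivAt (convex_Icc _ _) (fun t ht => hγ' t (hpos t ht))
    (fun t ht => hasDerivAt_mul_rpow_sub_mul_rpow_div q r (hpos t (interior_subset ht))),
    interior_Icc]
  set β := (q * (q - 1) / (r * (r - 1))) ^ (1 / (q - r))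
  have hβ : 0 ≤ β :=
    Real.rpow_nonneg (div_mul_sub_one_nonneg (hr.trans hrq).le hq.le hr.le (hrq.trans hq).le) _
  calc (∀ t ∈ Ioo (a / b) (b / a),
        0 ≤ (q * (q - 1) * t ^ (q - 2) - r * (r - 1) * t ^ (r - 2)) / (q - r))
      ↔ ∀ t ∈ Ioo (a / b) (b / a), β * t ≤ 1 := forall₂_congr fun t ht =>
        mul_rpow_sub_mul_rpow_div_nonneg_iff hr hrq hq (hpos t (Ioo_subset_Icc_self ht))
    _ ↔ β * (b / a) ≤ 1 :=
        forall_mem_Ioo_mul_le_one_iff hβ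
          (((div_lt_one hb).mpr hab).trans ((one_lt_div ha).mpr hab))
    _ ↔ β ≤ a / b := by rw [← le_div_iff₀ (div_pos hb ha), one_div_div]

/-- For `r < q` with `q, r ∈ (0,1)`, `q + r ≥ 1`, `β_{q,r} = (q(q−1)/(r(r−1)))^{1/(q−r)}`
and `0 < a < b`, the function `γ_{q,r}(t) = (t^q − t^r)/(q−r)` is convex on `[a/b, b/a]`
if and only if `β_{q,r} ≤ a/b`. -/
theorem stmt_19 (q r a b : ℝ) (hrq : r < q) (hr : 0 < r) (hq : q < 1)
    (hsum : 1 ≤ q + r) (ha : 0 < a) (hab : a < b)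
    (γ : ℝ → ℝ) (hγ : ∀ t : ℝ, 0 < t → γ t = (t ^ q - t ^ r) / (q - r)) :
    ConvexOn ℝ (Set.Icc (a / b) (b / a)) γ ↔
      (q * (q - 1) / (r * (r - 1))) ^ (1 / (q - r)) ≤ a / b :=
  stmt_19_general q r a b hrq hr hq ha hab γ hγ
end
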